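/- arXiv:2105.09837 — 4 statements merged into one kernel-verified Lean document; each statement's English description precedes it below -/
import Mathlib

section
/- Let H be a real inner product space, let ν > 0, ρ > 0, S ≥ 0, and let f : H → H be Lipschitz continuous with constant S. Let z, z⁺, q, p, u ∈ H with u = ν(q − f(z)). Suppose q⁺ minimizes over H the function Φ(q') = (ν/2)‖f(z⁺) − q'‖² + ⟨u, p − q'⟩ + (ρ/2)‖p − q'‖², and set u⁺ = u + ρ(p − q⁺). Then [(ν/2)‖f(z⁺) − q‖² + ⟨u, p − q⟩ + (ρ/2)‖p − q‖²] − [(ν/2)‖f(z⁺) − q⁺‖² + ⟨u⁺, p − q⁺⟩ + (ρ/2)‖p − q⁺‖²] ≥ (ρ/2 − 2ν²/ρ − ν/2)‖q⁺ − q‖² − (2ν²S²/ρ)‖z⁺ − z‖². -/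
open scoped RealInnerProductSpace

/-!
The `q`-subproblem is a quadratic with Hessian `(ν + ρ) • id`, so its minimizer `q⁺` is where the
gradient `ν (q⁺ - f z⁺) - u + ρ (q⁺ - p)` vanishes, and the subproblem then drops by exactly
`(ν + ρ)/2 ‖q⁺ - q‖²` from `q` to `q⁺`. The dual update costs `ρ ‖p - q⁺‖²`. With `u = ν (q - f z)`, the
vanishing gradient says `ρ (p - q⁺) = ν ((q⁺ - q) - (f z⁺ - f z))`, which the Lipschitz bound on `f`
and `(a + b)² ≤ 2a² + 2b²` turn into the estimate of the dual cost.
-/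

section QSubproblem

variable {H : Type*} [NormedAddCommGroup H] [InnerProductSpace ℝ H]

/-- The terms of the augmented Lagrangian of pdADMM that depend on `q`, with `a = f(z⁺)`. -/
noncomputable def qSubproblem (ν ρ : ℝ) (a u p q : H) : ℝ :=
  (ν / 2) * ‖a - q‖ ^ 2 + ⟪u, p - q⟫ + (ρ / 2) * ‖p - q‖ ^ 2

theorem qSubproblem_add (ν ρ : ℝ) (a u p x d : H) :
    qSubproblem ν ρ a u p (x + d) =
      qSubproblem ν ρ a u p x + ⟪ν • (x - a) - u + ρ • (x - p), d⟫ + ((ν + ρ) / 2) * ‖d‖ ^ 2 := by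
  have ha : a - (x + d) = (a - x) - d := by abel
  have hp : p - (x + d) = (p - x) - d := by abel
  simp only [qSubproblem, ha, hp, norm_sub_sq_real, inner_sub_right, inner_add_left,
    inner_sub_left, real_inner_smul_left, ← neg_sub x a, ← neg_sub x p, inner_neg_left]
  ring

theorem eq_zero_of_forall_inner_add_mul_norm_sq_nonneg {g : H} {c : ℝ}
    (h : ∀ d : H, 0 ≤ ⟪g, d⟫ + c * ‖d‖ ^ 2) : g = 0 := by
  set t := 1 / (|c| + 1) with ht
  have ht_pos : 0 < t := by positivity
  have hct : c * t < 1 := by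
    rw [ht, mul_one_div, div_lt_one (by positivity)]
    linarith [le_abs_self c]
  have key : 0 ≤ t * (c * t - 1) * ‖g‖ ^ 2 := by
    have := h (-(t • g))
    rwa [inner_neg_right, real_inner_smul_right, real_inner_self_eq_norm_sq, norm_neg,
      norm_smul, Real.norm_of_nonneg ht_pos.le, mul_pow,
      show -(t * ‖g‖ ^ 2) + c * (t ^ 2 * ‖g‖ ^ 2) = t * (c * t - 1) * ‖g‖ ^ 2 by ring] at this
  have : ‖g‖ ^ 2 ≤ 0 := by nlinarith [mul_neg_of_pos_of_neg ht_pos (sub_neg.mpr hct)]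
  simpa using this

variable {ν ρ : ℝ} {a u p x : H}

theorem qSubproblem_grad_eq_zero_of_isMinOn
    (hmin : IsMinOn (qSubproblem ν ρ a u p) Set.univ x) :
    ν • (x - a) - u + ρ • (x - p) = 0 :=
  eq_zero_of_forall_inner_add_mul_norm_sq_nonneg (c := (ν + ρ) / 2) fun d => by
    have := isMinOn_univ_iff.mp hmin (x + d)
    rw [qSubproblem_add] at this
    linarith

theorem qSubproblem_sub_eq_of_isMinOn
    (hmin : IsMinOn (qSubproblem ν ρ a u p) Set.univ x) (q : H) :
    qSubproblem ν ρ a u p q - qSubproblem ν ρ a u p x = ((ν + ρ) / 2) * ‖x - q‖ ^ 2 := by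
  have := qSubproblem_add ν ρ a u p x (q - x)
  rw [add_sub_cancel, qSubproblem_grad_eq_zero_of_isMinOn hmin, inner_zero_left,
    norm_sub_rev] at this
  linarith

end QSubproblem

theorem norm_sub_sub_sq_le_of_lipschitz {H : Type*} [NormedAddCommGroup H] {f : H → H} {S : ℝ}
    (hf : ∀ x y : H, ‖f x - f y‖ ≤ S * ‖x - y‖) (x x' z z' : H) :
    ‖(x' - x) - (f z' - f z)‖ ^ 2 ≤ 2 * ‖x' - x‖ ^ 2 + 2 * S ^ 2 * ‖z' - z‖ ^ 2 :=
  calc ‖(x' - x) - (f z' - f z)‖ ^ 2 ≤ (‖x' - x‖ + S * ‖z' - z‖) ^ 2 := by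
        gcongr
        exact (norm_sub_le _ _).trans (add_le_add_right (hf z' z) _)
    _ ≤ 2 * (‖x' - x‖ ^ 2 + (S * ‖z' - z‖) ^ 2) := add_sq_le
    _ = 2 * ‖x' - x‖ ^ 2 + 2 * S ^ 2 * ‖z' - z‖ ^ 2 := by ring

theorem mul_norm_sq_eq_of_smul_eq {E : Type*} [NormedAddCommGroup E] [NormedSpace ℝ E]
    {ν ρ : ℝ} {r w : E} (hρ : 0 < ρ) (h : ρ • r = ν • w) :
    ρ * ‖r‖ ^ 2 = ν ^ 2 / ρ * ‖w‖ ^ 2 := by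
  have := congrArg (‖·‖ ^ 2) h
  simp only [norm_smul, mul_pow, Real.norm_eq_abs, sq_abs] at this
  field_simp
  linarith

theorem stmt6_general {H : Type*} [NormedAddCommGroup H] [InnerProductSpace ℝ H]
    (ν ρ S : ℝ) (hν : 0 < ν) (hρ : 0 < ρ) (f : H → H)
    (hf : ∀ x y : H, ‖f x - f y‖ ≤ S * ‖x - y‖)
    (z zplus q p u qplus uplus : H)
    (hu : u = ν • (q - f z))
    (hmin : ∀ q' : H,
      (ν / 2) * ‖f zplus - qplus‖ ^ 2 + ⟪u, p - qplus⟫ + (ρ / 2) * ‖p - qplus‖ ^ 2 ≤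
      (ν / 2) * ‖f zplus - q'‖ ^ 2 + ⟪u, p - q'⟫ + (ρ / 2) * ‖p - q'‖ ^ 2)
    (hup : uplus = u + ρ • (p - qplus)) :
    ((ν / 2) * ‖f zplus - q‖ ^ 2 + ⟪u, p - q⟫ + (ρ / 2) * ‖p - q‖ ^ 2) -
      ((ν / 2) * ‖f zplus - qplus‖ ^ 2 + ⟪uplus, p - qplus⟫ + (ρ / 2) * ‖p - qplus‖ ^ 2) ≥
      (ρ / 2 - 2 * ν ^ 2 / ρ - ν / 2) * ‖qplus - q‖ ^ 2 -
        (2 * ν ^ 2 * S ^ 2 / ρ) * ‖zplus - z‖ ^ 2 := by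
  have hqmin : IsMinOn (qSubproblem ν ρ (f zplus) u p) Set.univ qplus := isMinOn_univ_iff.mpr hmin
  have hdecrease := qSubproblem_sub_eq_of_isMinOn hqmin q
  unfold qSubproblem at hdecrease
  have hresidual : ρ • (p - qplus) = ν • ((qplus - q) - (f zplus - f z)) := by
    have := qSubproblem_grad_eq_zero_of_isMinOn hqmin
    rw [hu] at this
    linear_combination (norm := module) -this
  have hdual : ⟪uplus, p - qplus⟫ = ⟪u, p - qplus⟫ + ρ * ‖p - qplus‖ ^ 2 := by
    rw [hup, inner_add_left, real_inner_smul_left, real_inner_self_eq_norm_sq]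
  have hbound := mul_le_mul_of_nonneg_left
    (norm_sub_sub_sq_le_of_lipschitz hf q qplus z zplus) (by positivity : 0 ≤ ν ^ 2 / ρ)
  rw [← mul_norm_sq_eq_of_smul_eq hρ hresidual] at hbound
  rw [hdual]
  linear_combination -hdecrease + hbound + mul_nonneg hν.le (sq_nonneg ‖qplus - q‖)

/-- Per-layer joint q-and-dual-update decrease lemma of pdADMM. -/
theorem stmt6 {H : Type*} [NormedAddCommGroup H] [InnerProductSpace ℝ H]
    (ν ρ S : ℝ) (hν : 0 < ν) (hρ : 0 < ρ) (hS : 0 ≤ S) (f : H → H)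
    (hf : ∀ x y : H, ‖f x - f y‖ ≤ S * ‖x - y‖)
    (z zplus q p u qplus uplus : H)
    (hu : u = ν • (q - f z))
    (hmin : ∀ q' : H,
      (ν / 2) * ‖f zplus - qplus‖ ^ 2 + ⟪u, p - qplus⟫ + (ρ / 2) * ‖p - qplus‖ ^ 2 ≤
      (ν / 2) * ‖f zplus - q'‖ ^ 2 + ⟪u, p - q'⟫ + (ρ / 2) * ‖p - q'‖ ^ 2)
    (hup : uplus = u + ρ • (p - qplus)) :
    ((ν / 2) * ‖f zplus - q‖ ^ 2 + ⟪u, p - q⟫ + (ρ / 2) * ‖p - q‖ ^ 2) -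
      ((ν / 2) * ‖f zplus - qplus‖ ^ 2 + ⟪uplus, p - qplus⟫ + (ρ / 2) * ‖p - qplus‖ ^ 2) ≥
      (ρ / 2 - 2 * ν ^ 2 / ρ - ν / 2) * ‖qplus - q‖ ^ 2 -
        (2 * ν ^ 2 * S ^ 2 / ρ) * ‖zplus - z‖ ^ 2 :=
  stmt6_general ν ρ S hν hρ f hf z zplus q p u qplus uplus hu hmin hup
end

section
/- Let ν > 0 and a, q, z₀ ∈ ℝ, and define g : ℝ → ℝ by g(z) = (ν/2)(z − a)² + (ν/2)(q − max(z, 0))² + (ν/2)(z − z₀)². Let z₋ = min((a + z₀)/2, 0) and z₊ = max((a + z₀ + q)/3, 0). Then for every z ∈ ℝ, g(z) ≥ min(g(z₋), g(z₊)); in particular the minimum of g over ℝ is attained at z₋ or z₊. -/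
/-! On each of the half-lines `z ≤ 0` and `z ≥ 0` the ReLU is linear, so the objective is a
convex quadratic there, namely a positive multiple of the squared distance to `(a + z₀) / 2`,
respectively to `(a + z₀ + q) / 3`, plus a constant. Its minimum over the half-line is therefore
attained at the projection of that point onto the half-line, which is `z₋`, respectively `z₊`. -/

section Projection

variable {c z : ℝ}

theorem sq_min_zero_sub_le (hz : z ≤ 0) : (min c 0 - c) ^ 2 ≤ (z - c) ^ 2 := by
  rcases le_total c 0 with hc | hc
  · simp [min_eq_left hc, sq_nonneg]
  · rw [min_eq_right hc]
    nlinarith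

theorem sq_max_zero_sub_le (hz : 0 ≤ z) : (max c 0 - c) ^ 2 ≤ (z - c) ^ 2 := by
  rcases le_total c 0 with hc | hc
  · rw [max_eq_right hc]
    nlinarith
  · simp [max_eq_left hc, sq_nonneg]

end Projection

section Objective

noncomputable def reluZObjective (ν a q z₀ z : ℝ) : ℝ :=
  (ν / 2) * (z - a) ^ 2 + (ν / 2) * (q - max z 0) ^ 2 + (ν / 2) * (z - z₀) ^ 2

variable {ν a q z₀ z w : ℝ}

theorem reluZObjective_sub_of_nonpos (hz : z ≤ 0) (hw : w ≤ 0) :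
    reluZObjective ν a q z₀ z - reluZObjective ν a q z₀ w =
      ν * ((z - (a + z₀) / 2) ^ 2 - (w - (a + z₀) / 2) ^ 2) := by
  simp only [reluZObjective, max_eq_right hz, max_eq_right hw]
  ring

theorem reluZObjective_sub_of_nonneg (hz : 0 ≤ z) (hw : 0 ≤ w) :
    reluZObjective ν a q z₀ z - reluZObjective ν a q z₀ w =
      3 * ν / 2 * ((z - (a + z₀ + q) / 3) ^ 2 - (w - (a + z₀ + q) / 3) ^ 2) := by
  simp only [reluZObjective, max_eq_left hz, max_eq_left hw]
  ring

theorem reluZObjective_min_le_of_nonpos (hν : 0 ≤ ν) (hz : z ≤ 0) :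
    reluZObjective ν a q z₀ (min ((a + z₀) / 2) 0) ≤ reluZObjective ν a q z₀ z := by
  have hdiff := reluZObjective_sub_of_nonpos (ν := ν) (a := a) (q := q) (z₀ := z₀) hz
    (min_le_right ((a + z₀) / 2) 0)
  have hsq := sq_min_zero_sub_le (c := (a + z₀) / 2) hz
  linarith [mul_nonneg hν (sub_nonneg.2 hsq)]

theorem reluZObjective_max_le_of_nonneg (hν : 0 ≤ ν) (hz : 0 ≤ z) :
    reluZObjective ν a q z₀ (max ((a + z₀ + q) / 3) 0) ≤ reluZObjective ν a q z₀ z := by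
  have hdiff := reluZObjective_sub_of_nonneg (ν := ν) (a := a) (q := q) (z₀ := z₀) hz
    (le_max_right ((a + z₀ + q) / 3) 0)
  have hsq := sq_max_zero_sub_le (c := (a + z₀ + q) / 3) hz
  linarith [mul_nonneg hν (sub_nonneg.2 hsq)]

theorem min_reluZObjective_le (hν : 0 ≤ ν) (z : ℝ) :
    min (reluZObjective ν a q z₀ (min ((a + z₀) / 2) 0))
        (reluZObjective ν a q z₀ (max ((a + z₀ + q) / 3) 0)) ≤ reluZObjective ν a q z₀ z := by
  rcases le_total z 0 with hz | hz
  · exact (min_le_left _ _).trans (reluZObjective_min_le_of_nonpos hν hz)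
  · exact (min_le_right _ _).trans (reluZObjective_max_le_of_nonneg hν hz)

end Objective

/-- Closed-form solution of the scalar z-subproblem of pdADMM with ReLU activation. -/
theorem stmt8 (ν a q z₀ : ℝ) (hν : 0 < ν) (g : ℝ → ℝ)
    (hg : ∀ z : ℝ, g z =
      (ν / 2) * (z - a) ^ 2 + (ν / 2) * (q - max z 0) ^ 2 + (ν / 2) * (z - z₀) ^ 2)
    (zm zp : ℝ) (hzm : zm = min ((a + z₀) / 2) 0) (hzp : zp = max ((a + z₀ + q) / 3) 0) :
    (∀ z : ℝ, g z ≥ min (g zm) (g zp)) ∧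
    ((∀ z : ℝ, g zm ≤ g z) ∨ (∀ z : ℝ, g zp ≤ g z)) := by
  have hmin : ∀ z, min (g zm) (g zp) ≤ g z := by
    obtain rfl : g = reluZObjective ν a q z₀ := funext hg
    subst hzm hzp
    exact min_reluZObjective_le hν.le
  refine ⟨hmin, ?_⟩
  rcases min_choice (g zm) (g zp) with h | h <;> rw [h] at hmin
  · exact Or.inl hmin
  · exact Or.inr hmin
end

section
/- Let W, W' be real m×n matrices and p, p' ∈ ℝⁿ, b, b', z, z' ∈ ℝᵐ. Suppose ‖W‖ ≤ N_W, ‖W'‖ ≤ N_W (operator norms), ‖p‖ ≤ N_p, ‖b‖ ≤ N_b, ‖z‖ ≤ N_z for nonnegative constants N_W, N_p, N_b, N_z. Then ‖W'ᵀW'p' − WᵀWp + W'ᵀb' − Wᵀb − W'ᵀz' + Wᵀz‖ ≤ N_W²‖p' − p‖ + (2N_W N_p + N_b + N_z)‖W' − W‖ + N_W‖b' − b‖ + N_W‖z' − z‖. -/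
open scoped Matrix Matrix.Norms.L2Operator

/-!
Writing `v := W p + b - z`, the vector is `W'ᵀ v' - Wᵀ v`. Splitting it as
`W'ᵀ (v' - v) + (W' - W)ᵀ v` bounds it by `‖W'‖ ‖v' - v‖ + ‖W' - W‖ ‖v‖`, and the same
splitting applied to `W' p' - W p` bounds `‖v' - v‖`; the operator norm is invariant under
transposition.
-/

namespace Matrix

variable {m n : Type*} [Fintype m] [Fintype n] [DecidableEq n]

lemma l2_opNorm_transpose [DecidableEq m] (A : Matrix m n ℝ) : ‖Aᵀ‖ = ‖A‖ := by
  rw [← conjTranspose_eq_transpose_of_trivial, l2_opNorm_conjTranspose]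

variable {𝕜 : Type*} [RCLike 𝕜]

lemma norm_toEuclideanLin_apply_le (A : Matrix m n 𝕜) (x : EuclideanSpace 𝕜 n) :
    ‖toEuclideanLin A x‖ ≤ ‖A‖ * ‖x‖ :=
  A.l2_opNorm_mulVec x

lemma norm_toEuclideanLin_apply_sub_le (A A' : Matrix m n 𝕜) (x x' : EuclideanSpace 𝕜 n) :
    ‖toEuclideanLin A' x' - toEuclideanLin A x‖ ≤ ‖A'‖ * ‖x' - x‖ + ‖A' - A‖ * ‖x‖ := by
  have split : toEuclideanLin A' x' - toEuclideanLin A x =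
      toEuclideanLin A' (x' - x) + toEuclideanLin (A' - A) x := by
    simp only [map_sub, LinearMap.sub_apply]
    abel
  rw [split]
  exact norm_add_le_of_le (norm_toEuclideanLin_apply_le _ _) (norm_toEuclideanLin_apply_le _ _)

end Matrix

open Matrix

theorem stmt14_general {m n : ℕ} (W W' : Matrix (Fin m) (Fin n) ℝ)
    (p p' : EuclideanSpace ℝ (Fin n)) (b b' z z' : EuclideanSpace ℝ (Fin m))
    (NW Np Nb Nz : ℝ)
    (hW : ‖W‖ ≤ NW) (hW' : ‖W'‖ ≤ NW) (hp : ‖p‖ ≤ Np) (hb : ‖b‖ ≤ Nb) (hz : ‖z‖ ≤ Nz) :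
    ‖Matrix.toEuclideanLin W'ᵀ (Matrix.toEuclideanLin W' p') -
        Matrix.toEuclideanLin Wᵀ (Matrix.toEuclideanLin W p) +
        Matrix.toEuclideanLin W'ᵀ b' - Matrix.toEuclideanLin Wᵀ b -
        Matrix.toEuclideanLin W'ᵀ z' + Matrix.toEuclideanLin Wᵀ z‖ ≤
      NW ^ 2 * ‖p' - p‖ + (2 * NW * Np + Nb + Nz) * ‖W' - W‖ +
        NW * ‖b' - b‖ + NW * ‖z' - z‖ := by
  set v := toEuclideanLin W p + b - z
  set v' := toEuclideanLin W' p' + b' - z'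
  have factor : toEuclideanLin W'ᵀ (toEuclideanLin W' p') -
      toEuclideanLin Wᵀ (toEuclideanLin W p) + toEuclideanLin W'ᵀ b' - toEuclideanLin Wᵀ b -
      toEuclideanLin W'ᵀ z' + toEuclideanLin Wᵀ z =
      toEuclideanLin W'ᵀ v' - toEuclideanLin Wᵀ v := by
    simp only [v, v', map_add, map_sub]
    abel
  have hWdiff : ‖W'ᵀ - Wᵀ‖ = ‖W' - W‖ := by rw [← transpose_sub, l2_opNorm_transpose]
  have hWp : ‖toEuclideanLin W p‖ ≤ NW * Np :=
    (norm_toEuclideanLin_apply_le W p).trans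
      (mul_le_mul hW hp (norm_nonneg p) ((norm_nonneg W).trans hW))
  have hv : ‖v‖ ≤ NW * Np + Nb + Nz := norm_sub_le_of_le (norm_add_le_of_le hWp hb) hz
  have hv' : ‖v' - v‖ ≤ (NW * ‖p' - p‖ + ‖W' - W‖ * Np) + ‖b' - b‖ + ‖z' - z‖ := by
    have : v' - v = (toEuclideanLin W' p' - toEuclideanLin W p) + (b' - b) - (z' - z) := by
      simp only [v, v']; abel
    rw [this]
    have hWp' : ‖toEuclideanLin W' p' - toEuclideanLin W p‖ ≤ NW * ‖p' - p‖ + ‖W' - W‖ * Np :=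
      (norm_toEuclideanLin_apply_sub_le W W' p p').trans (by gcongr)
    exact norm_sub_le_of_le (norm_add_le_of_le hWp' le_rfl) le_rfl
  rw [factor]
  calc _ ≤ ‖W'ᵀ‖ * ‖v' - v‖ + ‖W'ᵀ - Wᵀ‖ * ‖v‖ := norm_toEuclideanLin_apply_sub_le _ _ _ _
    _ ≤ NW * ((NW * ‖p' - p‖ + ‖W' - W‖ * Np) + ‖b' - b‖ + ‖z' - z‖) +
        ‖W' - W‖ * (NW * Np + Nb + Nz) := by
      rw [l2_opNorm_transpose, hWdiff]
      gcongr
      exact (norm_nonneg W').trans hW'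
    _ = _ := by ring

/-- p-component bound in the Bounded Subgradient lemma of pdADMM, for real `m×n`
matrices with the L2 operator norm (matrices act on Euclidean spaces via
`Matrix.toEuclideanLin`, and `ᵀ` is the transpose). -/
theorem stmt14 {m n : ℕ} (W W' : Matrix (Fin m) (Fin n) ℝ)
    (p p' : EuclideanSpace ℝ (Fin n)) (b b' z z' : EuclideanSpace ℝ (Fin m))
    (NW Np Nb Nz : ℝ) (hNW : 0 ≤ NW) (hNp : 0 ≤ Np) (hNb : 0 ≤ Nb) (hNz : 0 ≤ Nz)
    (hW : ‖W‖ ≤ NW) (hW' : ‖W'‖ ≤ NW) (hp : ‖p‖ ≤ Np) (hb : ‖b‖ ≤ Nb) (hz : ‖z‖ ≤ Nz) :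
    ‖Matrix.toEuclideanLin W'ᵀ (Matrix.toEuclideanLin W' p') -
        Matrix.toEuclideanLin Wᵀ (Matrix.toEuclideanLin W p) +
        Matrix.toEuclideanLin W'ᵀ b' - Matrix.toEuclideanLin Wᵀ b -
        Matrix.toEuclideanLin W'ᵀ z' + Matrix.toEuclideanLin Wᵀ z‖ ≤
      NW ^ 2 * ‖p' - p‖ + (2 * NW * Np + Nb + Nz) * ‖W' - W‖ +
        NW * ‖b' - b‖ + NW * ‖z' - z‖ :=
  stmt14_general W W' p p' b b' z z' NW Np Nb Nz hW hW' hp hb hz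
end

section
/- Let H be a real inner product space, ν > 0, ρ > 0, and a, p, u ∈ H. For v ∈ H define Φ_v : H → ℝ by Φ_v(q') = (ν/2)‖a − q'‖² + ⟨v, p − q'⟩ + (ρ/2)‖p − q'‖². Suppose q⁺ minimizes Φ_u over H, and set u⁺ = u + ρ(p − q⁺). Then the gradient of Φ_{u⁺} at q⁺ equals u − u⁺; in particular ‖∇Φ_{u⁺}(q⁺)‖ = ‖u⁺ − u‖. -/
/-! The dual variable enters `Φ_v` only through the affine term `⟪v, p - q'⟫`, so
`Φ_{u⁺} = Φ_u + ⟪u⁺ - u, p - ·⟫`; at the minimiser `q⁺` of `Φ_u` only the gradient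
`u - u⁺` of the affine term survives. -/

open scoped RealInnerProductSpace

theorem IsLocalMin.hasFDerivAt_add {E : Type*} [NormedAddCommGroup E] [NormedSpace ℝ E]
    {f g : E → ℝ} {g' : E →L[ℝ] ℝ} {x : E} (hmin : IsLocalMin f x)
    (hf : DifferentiableAt ℝ f x) (hg : HasFDerivAt g g' x) :
    HasFDerivAt (fun y => f y + g y) g' x := by
  have h := hf.hasFDerivAt.add hg
  rwa [hmin.fderiv_eq_zero, zero_add] at h

theorem hasFDerivAt_inner_sub_right {H : Type*} [NormedAddCommGroup H] [InnerProductSpace ℝ H]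
    (w p q : H) : HasFDerivAt (fun q' : H => ⟪w, p - q'⟫) (innerSL ℝ (-w)) q := by
  have h : (fun q' : H => ⟪w, p - q'⟫) = fun q' => ⟪w, p⟫ + innerSL ℝ (-w) q' := by
    ext q'
    rw [innerSL_apply_apply, inner_neg_left, inner_sub_right, sub_eq_add_neg]
  rw [h]
  exact (innerSL ℝ (-w)).hasFDerivAt.const_add _

theorem stmt15_general {H : Type*} [NormedAddCommGroup H] [InnerProductSpace ℝ H]
    (ν ρ : ℝ) (a p u : H)
    (Φ : H → H → ℝ)
    (hΦ : ∀ v q' : H, Φ v q' = (ν / 2) * ‖a - q'‖ ^ 2 + ⟪v, p - q'⟫ + (ρ / 2) * ‖p - q'‖ ^ 2)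
    (qplus : H) (hmin : ∀ q' : H, Φ u qplus ≤ Φ u q')
    (uplus : H) :
    HasFDerivAt (Φ uplus) (innerSL ℝ (u - uplus)) qplus ∧
      ‖u - uplus‖ = ‖uplus - u‖ := by
  have hshift : Φ uplus = fun q' => Φ u q' + ⟪uplus - u, p - q'⟫ := by
    ext q'
    simp only [hΦ, inner_sub_left]
    ring
  have hdiff : DifferentiableAt ℝ (Φ u) qplus := by
    have hsq (b : H) : DifferentiableAt ℝ (fun q' : H => ‖b - q'‖ ^ 2) qplus :=
      ((differentiableAt_const b).sub differentiableAt_id).norm_sq ℝ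
    rw [funext (hΦ u)]
    exact (((hsq a).const_mul _).add (hasFDerivAt_inner_sub_right u p qplus).differentiableAt).add
      ((hsq p).const_mul _)
  have hlocmin : IsLocalMin (Φ u) qplus := Filter.Eventually.of_forall hmin
  refine ⟨?_, norm_sub_rev u uplus⟩
  rw [hshift, ← neg_sub uplus u]
  exact hlocmin.hasFDerivAt_add hdiff (hasFDerivAt_inner_sub_right _ p qplus)

/-- q-component of the Bounded Subgradient lemma of pdADMM: after the q-update and the
dual update `u⁺ = u + ρ(p − q⁺)`, the gradient of `Φ_{u⁺}` at `q⁺` equals `u − u⁺`;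
in particular its norm is `‖u⁺ − u‖`. -/
theorem stmt15 {H : Type*} [NormedAddCommGroup H] [InnerProductSpace ℝ H]
    (ν ρ : ℝ) (hν : 0 < ν) (hρ : 0 < ρ) (a p u : H)
    (Φ : H → H → ℝ)
    (hΦ : ∀ v q' : H, Φ v q' = (ν / 2) * ‖a - q'‖ ^ 2 + ⟪v, p - q'⟫ + (ρ / 2) * ‖p - q'‖ ^ 2)
    (qplus : H) (hmin : ∀ q' : H, Φ u qplus ≤ Φ u q')
    (uplus : H) (hup : uplus = u + ρ • (p - qplus)) :
    HasFDerivAt (Φ uplus) (innerSL ℝ (u - uplus)) qplus ∧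
      ‖u - uplus‖ = ‖uplus - u‖ :=
  stmt15_general ν ρ a p u Φ hΦ qplus hmin uplus
end
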